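/- For ω > 0, the matrix A := A^{(p;ω)}_{(𝒥)} has all diagonal entries nonnegative, strictly positive maximal diagonal entry c := max_{a∈[n]} A_{aa} > 0, and all off-diagonal entries nonpositive; consequently the Metropolis matrix 𝓜^{(p)}_{(𝒥)} := I − c^{−1} A belongs to ⟨p⟩^+, does not depend on ω, and has at least one diagonal entry equal to zero (so it lies in the boundary of ⟨p⟩^+). -/

import Mathlib

/-!
Write `S := 1 + ∑ᵤ r_{j_u}`. Expanding the rank-one matrices `e^{(p)}`, the only nonzero entries of
`A := A^{(p;ω)}_{(𝒥)}` lie in the rows and columns indexed by `𝒥 ∪ {n}`, where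
`A_{j_u j_v} = ω (δ_{uv} − r_{j_v}/S)`, `A_{j_u n} = −ω/S`, `A_{n j_v} = −ω r_{j_v}/S` and
`A_{nn} = ω (S − 1)/S`. As `0 < r_{j_v} < S`, the diagonal is nonnegative, `A_{nn} > 0` and the
off-diagonal entries are nonpositive. Every `e^{(p)}_{(j,k)}` annihilates `1` on the right and `p`
on the left, hence so does `A`; so `I − c⁻¹ A` is a stochastic matrix fixing `p`, and its diagonal
vanishes where `c` is attained. Both `A` and `c` are linear in `ω > 0`, so `c⁻¹ A` does not
depend on `ω`.
-/

open Matrix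

/-- The ratio `r_j := p_j / p_n` for `j ∈ [n-1]`, with the state space `[n]` modeled as
`Fin (m+1)`, the last state `n` as `Fin.last m`, and `[n-1]` as `Fin m` via `Fin.castSucc`. -/
noncomputable def r (m : ℕ) (p : Fin (m + 1) → ℝ) (j : Fin m) : ℝ :=
  p j.castSucc / p (Fin.last m)

/-- `e^{(p)}_{(j,k)} := (e_j − r_j e_n)(e_k^T − e_n^T)` as an `(m+1) × (m+1)` real matrix. -/
noncomputable def Ep (m : ℕ) (p : Fin (m + 1) → ℝ) (j k : Fin m) :
    Matrix (Fin (m + 1)) (Fin (m + 1)) ℝ :=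
  Matrix.vecMulVec
    (fun a => (if a = j.castSucc then (1 : ℝ) else 0) -
      r m p j * (if a = Fin.last m then (1 : ℝ) else 0))
    (fun b => (if b = k.castSucc then (1 : ℝ) else 0) - (if b = Fin.last m then (1 : ℝ) else 0))

/-- For a `d`-element subset `𝒥 = {j_1, …, j_d} ⊆ [n-1]` (given as an injective tuple
`J : Fin d → Fin m`) and a `d × d` matrix `μ`, the `n × n` matrix
`μ^{(p)}_{(𝒥)} := Σ_{u,v} μ_{uv} e^{(p)}_{(j_u, j_v)}`. -/
noncomputable def liftJ (m d : ℕ) (p : Fin (m + 1) → ℝ) (J : Fin d → Fin m)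
    (μ : Matrix (Fin d) (Fin d) ℝ) : Matrix (Fin (m + 1)) (Fin (m + 1)) ℝ :=
  ∑ u, ∑ v, μ u v • Ep m p (J u) (J v)

/-- The matrix `A^{(p;ω)}_{(𝒥)} := ω Σ_{u,v} (δ_{j_u j_v} − r_{j_v}/(1 + r_{(𝒥)} 1_d))
e^{(p)}_{(j_u, j_v)}`. -/
noncomputable def AJ (m d : ℕ) (p : Fin (m + 1) → ℝ) (J : Fin d → Fin m) (ω : ℝ) :
    Matrix (Fin (m + 1)) (Fin (m + 1)) ℝ :=
  ω • ∑ u, ∑ v,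
    ((if J u = J v then (1 : ℝ) else 0) - r m p (J v) / (1 + ∑ w, r m p (J w))) •
      Ep m p (J u) (J v)

/-- The largest diagonal entry `c = max_{a} (A^{(p;ω)}_{(𝒥)})_{aa}`. -/
noncomputable def cdiag (m d : ℕ) (p : Fin (m + 1) → ℝ) (J : Fin d → Fin m) (ω : ℝ) : ℝ :=
  Finset.univ.sup' Finset.univ_nonempty (fun a => AJ m d p J ω a a)

open Finset

section Metropolis

variable {ι : Type*} [DecidableEq ι] {A : Matrix ι ι ℝ} {c : ℝ}

lemma one_sub_inv_smul_nonneg (hc : 0 < c) (hdiag : ∀ a, A a a ≤ c)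
    (hoff : ∀ a b, a ≠ b → A a b ≤ 0) (a b : ι) : 0 ≤ (1 - c⁻¹ • A) a b := by
  rw [Matrix.sub_apply, Matrix.smul_apply, smul_eq_mul]
  rcases eq_or_ne a b with rfl | hab
  · rw [one_apply_eq, sub_nonneg, inv_mul_le_one₀ hc]
    exact hdiag a
  · rw [one_apply_ne hab, zero_sub, neg_nonneg]
    exact mul_nonpos_of_nonneg_of_nonpos (inv_nonneg.2 hc.le) (hoff a b hab)

lemma one_sub_inv_smul_apply_self_eq_zero {a : ι} (ha : A a a = c) (hc : c ≠ 0) :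
    (1 - c⁻¹ • A) a a = 0 := by
  rw [Matrix.sub_apply, Matrix.smul_apply, smul_eq_mul, one_apply_eq, ha, inv_mul_cancel₀ hc,
    sub_self]

lemma one_sub_smul_mulVec_of_mulVec_eq_zero [Fintype ι] {v : ι → ℝ} (hA : A *ᵥ v = 0)
    (c : ℝ) :
    (1 - c • A) *ᵥ v = v := by
  rw [sub_mulVec, one_mulVec, smul_mulVec, hA, smul_zero, sub_zero]

lemma vecMul_one_sub_smul_of_vecMul_eq_zero [Fintype ι] {v : ι → ℝ} (hA : v ᵥ* A = 0)
    (c : ℝ) :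
    v ᵥ* (1 - c • A) = v := by
  rw [vecMul_sub, vecMul_one, vecMul_smul, hA, smul_zero, sub_zero]

end Metropolis

section RankOne

variable {m : ℕ} (p : Fin (m + 1) → ℝ)

noncomputable def epLeft (j : Fin m) (a : Fin (m + 1)) : ℝ :=
  (if a = j.castSucc then (1 : ℝ) else 0) - r m p j * (if a = Fin.last m then (1 : ℝ) else 0)

def epRight (k : Fin m) (b : Fin (m + 1)) : ℝ :=
  (if b = k.castSucc then (1 : ℝ) else 0) - (if b = Fin.last m then (1 : ℝ) else 0)

lemma Ep_eq_vecMulVec (j k : Fin m) : Ep m p j k = vecMulVec (epLeft p j) (epRight k) := rfl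

lemma epLeft_castSucc (j k : Fin m) : epLeft p j k.castSucc = if k = j then 1 else 0 := by
  simp [epLeft, (Fin.castSucc_lt_last k).ne]

lemma epLeft_last (j : Fin m) : epLeft p j (Fin.last m) = -r m p j := by
  simp [epLeft, (Fin.castSucc_lt_last j).ne']

lemma epRight_castSucc (k l : Fin m) : epRight k l.castSucc = if l = k then 1 else 0 := by
  simp [epRight, (Fin.castSucc_lt_last l).ne]

lemma epRight_last (k : Fin m) : epRight k (Fin.last m) = -1 := by
  simp [epRight, (Fin.castSucc_lt_last k).ne']

lemma Ep_mulVec_one (j k : Fin m) : Ep m p j k *ᵥ (fun _ => 1) = 0 := by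
  have : epRight k ⬝ᵥ (fun _ => (1 : ℝ)) = 0 := by
    simp [epRight, dotProduct, sum_sub_distrib]
  rw [Ep_eq_vecMulVec, vecMulVec_mulVec, this]
  simp

lemma vecMul_Ep (hp : p (Fin.last m) ≠ 0) (j k : Fin m) : p ᵥ* Ep m p j k = 0 := by
  have : p ⬝ᵥ epLeft p j = 0 := by
    simp [epLeft, dotProduct, mul_sub, sum_sub_distrib, r, mul_div_cancel₀ _ hp]
  rw [Ep_eq_vecMulVec, vecMul_vecMulVec, this, zero_smul]

end RankOne

section Entries

variable {m d : ℕ} (p : Fin (m + 1) → ℝ) {J : Fin d → Fin m}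

lemma AJ_eq_smul (ω : ℝ) : AJ m d p J ω = ω • AJ m d p J 1 := by
  rw [AJ, AJ, one_smul]

lemma AJ_mulVec_one (ω : ℝ) : AJ m d p J ω *ᵥ (fun _ => 1) = 0 := by
  simp [AJ, smul_mulVec, sum_mulVec, Ep_mulVec_one]

lemma vecMul_AJ (hp : p (Fin.last m) ≠ 0) (ω : ℝ) : p ᵥ* AJ m d p J ω = 0 := by
  simp [AJ, vecMul_smul, vecMul_sum, vecMul_Ep p hp]

lemma AJ_apply (hJ : J.Injective) (ω : ℝ) (a b : Fin (m + 1)) :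
    AJ m d p J ω a b = ω * ((∑ u, epLeft p (J u) a * epRight (J u) b) -
      (∑ u, epLeft p (J u) a) * (∑ v, r m p (J v) * epRight (J v) b) /
        (1 + ∑ w, r m p (J w))) := by
  simp only [AJ, Matrix.smul_apply, Matrix.sum_apply, smul_eq_mul, Ep_eq_vecMulVec,
    vecMulVec_apply, hJ.eq_iff, sub_mul, sum_sub_distrib, ite_mul, one_mul, zero_mul,
    sum_ite_eq, mem_univ, if_true, sum_mul, sum_div, mul_sum]
  rw [sum_comm]
  congr 2
  refine sum_congr rfl fun v _ => sum_congr rfl fun u _ => ?_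
  ring

lemma AJ_castSucc_castSucc (hJ : J.Injective) (ω : ℝ) (u v : Fin d) :
    AJ m d p J ω (J u).castSucc (J v).castSucc =
      ω * ((if u = v then 1 else 0) - r m p (J v) / (1 + ∑ w, r m p (J w))) := by
  rw [AJ_apply p hJ]
  simp [epLeft_castSucc, epRight_castSucc, hJ.eq_iff, eq_comm (a := u)]

lemma AJ_castSucc_last (hJ : J.Injective) (ω : ℝ)
    (hS : 1 + ∑ w, r m p (J w) ≠ 0) (u : Fin d) :
    AJ m d p J ω (J u).castSucc (Fin.last m) = -(ω / (1 + ∑ w, r m p (J w))) := by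
  rw [AJ_apply p hJ]
  simp [epLeft_castSucc, epRight_last, hJ.eq_iff]
  field_simp
  ring

lemma AJ_last_castSucc (hJ : J.Injective) (ω : ℝ)
    (hS : 1 + ∑ w, r m p (J w) ≠ 0) (v : Fin d) :
    AJ m d p J ω (Fin.last m) (J v).castSucc = -(ω * r m p (J v) / (1 + ∑ w, r m p (J w))) := by
  rw [AJ_apply p hJ]
  simp [epLeft_last, epRight_castSucc, hJ.eq_iff]
  field_simp
  ring

lemma AJ_last_last (hJ : J.Injective) (ω : ℝ)
    (hS : 1 + ∑ w, r m p (J w) ≠ 0) :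
    AJ m d p J ω (Fin.last m) (Fin.last m) =
      ω * (∑ w, r m p (J w)) / (1 + ∑ w, r m p (J w)) := by
  rw [AJ_apply p hJ]
  simp [epLeft_last, epRight_last]
  field_simp
  ring

lemma AJ_castSucc_apply_of_notMem {k : Fin m} (hk : k ∉ Set.range J) (ω : ℝ)
    (b : Fin (m + 1)) : AJ m d p J ω k.castSucc b = 0 := by
  have hzero (u : Fin d) : epLeft p (J u) k.castSucc = 0 := by
    rw [epLeft_castSucc, if_neg fun h => hk ⟨u, h.symm⟩]
  simp [AJ, Ep_eq_vecMulVec, Matrix.sum_apply, vecMulVec_apply, hzero]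

lemma AJ_apply_castSucc_of_notMem {k : Fin m} (hk : k ∉ Set.range J) (ω : ℝ)
    (a : Fin (m + 1)) : AJ m d p J ω a k.castSucc = 0 := by
  have hzero (v : Fin d) : epRight (J v) k.castSucc = 0 := by
    rw [epRight_castSucc, if_neg fun h => hk ⟨v, h.symm⟩]
  simp [AJ, Ep_eq_vecMulVec, Matrix.sum_apply, vecMulVec_apply, hzero]

end Entries

lemma eq_last_or_eq_castSucc_or_notMem_range {m d : ℕ} (J : Fin d → Fin m) (a : Fin (m + 1)) :
    a = Fin.last m ∨ (∃ u, a = (J u).castSucc) ∨ ∃ k ∉ Set.range J, a = k.castSucc := by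
  induction a using Fin.lastCases with
  | last => exact .inl rfl
  | cast k =>
    by_cases hk : k ∈ Set.range J
    · obtain ⟨u, rfl⟩ := hk
      exact .inr (.inl ⟨u, rfl⟩)
    · exact .inr (.inr ⟨k, hk, rfl⟩)

section Signs

variable {m d : ℕ} {p : Fin (m + 1) → ℝ} {J : Fin d → Fin m}

lemma r_pos (hp : ∀ a, 0 < p a) (j : Fin m) : 0 < r m p j :=
  div_pos (hp _) (hp _)

lemma r_lt_one_add_sum_r (hp : ∀ a, 0 < p a) (v : Fin d) :
    r m p (J v) < 1 + ∑ w, r m p (J w) := by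
  have := single_le_sum (fun w _ => (r_pos hp (J w)).le) (mem_univ v)
  linarith

lemma one_add_sum_r_pos (hp : ∀ a, 0 < p a) : 0 < 1 + ∑ w, r m p (J w) := by
  have := sum_nonneg fun w (_ : w ∈ univ) => (r_pos hp (J w)).le
  linarith

variable (hp : ∀ a, 0 < p a) (hJ : J.Injective) {ω : ℝ}
include hp hJ

lemma AJ_last_last_pos [Nonempty (Fin d)] (hω : 0 < ω) :
    0 < AJ m d p J ω (Fin.last m) (Fin.last m) := by
  have hS := one_add_sum_r_pos (J := J) hp
  have hR : 0 < ∑ w, r m p (J w) := sum_pos (fun w _ => r_pos hp (J w)) univ_nonempty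
  rw [AJ_last_last p hJ ω hS.ne']
  positivity

lemma AJ_apply_self_nonneg (hω : 0 ≤ ω) (a : Fin (m + 1)) : 0 ≤ AJ m d p J ω a a := by
  have hS := one_add_sum_r_pos (J := J) hp
  rcases eq_last_or_eq_castSucc_or_notMem_range J a with rfl | ⟨u, rfl⟩ | ⟨k, hk, rfl⟩
  · rw [AJ_last_last p hJ ω hS.ne']
    have := sum_nonneg fun w (_ : w ∈ univ) => (r_pos hp (J w)).le
    positivity
  · rw [AJ_castSucc_castSucc p hJ, if_pos rfl]
    have : r m p (J u) / (1 + ∑ w, r m p (J w)) ≤ 1 :=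
      (div_le_one hS).2 (r_lt_one_add_sum_r hp u).le
    exact mul_nonneg hω (sub_nonneg.2 this)
  · rw [AJ_castSucc_apply_of_notMem p hk]

lemma AJ_apply_nonpos_of_ne (hω : 0 ≤ ω) {a b : Fin (m + 1)} (hab : a ≠ b) :
    AJ m d p J ω a b ≤ 0 := by
  have hS := one_add_sum_r_pos (J := J) hp
  have hrS (v : Fin d) : 0 ≤ r m p (J v) / (1 + ∑ w, r m p (J w)) :=
    div_nonneg (r_pos hp (J v)).le hS.le
  rcases eq_last_or_eq_castSucc_or_notMem_range J b with rfl | ⟨v, rfl⟩ | ⟨l, hl, rfl⟩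
  · rcases eq_last_or_eq_castSucc_or_notMem_range J a with rfl | ⟨u, rfl⟩ | ⟨k, hk, rfl⟩
    · exact absurd rfl hab
    · rw [AJ_castSucc_last p hJ ω hS.ne', neg_nonpos]
      positivity
    · rw [AJ_castSucc_apply_of_notMem p hk]
  · rcases eq_last_or_eq_castSucc_or_notMem_range J a with rfl | ⟨u, rfl⟩ | ⟨k, hk, rfl⟩
    · rw [AJ_last_castSucc p hJ ω hS.ne', neg_nonpos, mul_div_assoc]
      exact mul_nonneg hω (hrS v)
    · rw [AJ_castSucc_castSucc p hJ, if_neg (by rintro rfl; exact hab rfl), zero_sub]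
      exact mul_nonpos_of_nonneg_of_nonpos hω (neg_nonpos.2 (hrS v))
    · rw [AJ_castSucc_apply_of_notMem p hk]
  · rw [AJ_apply_castSucc_of_notMem p hl]

end Signs

section MaxDiagonal

variable {m d : ℕ} (p : Fin (m + 1) → ℝ) (J : Fin d → Fin m)

lemma AJ_apply_self_le_cdiag (ω : ℝ) (a : Fin (m + 1)) : AJ m d p J ω a a ≤ cdiag m d p J ω :=
  le_sup' (fun a => AJ m d p J ω a a) (mem_univ a)

lemma exists_AJ_apply_self_eq_cdiag (ω : ℝ) : ∃ a, AJ m d p J ω a a = cdiag m d p J ω := by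
  obtain ⟨a, -, ha⟩ := exists_mem_eq_sup' univ_nonempty fun a => AJ m d p J ω a a
  exact ⟨a, ha.symm⟩

lemma cdiag_eq_mul {ω : ℝ} (hω : 0 ≤ ω) : cdiag m d p J ω = ω * cdiag m d p J 1 := by
  simp only [cdiag, mul₀_sup' hω, AJ_eq_smul p ω, Matrix.smul_apply, smul_eq_mul]

lemma one_sub_inv_cdiag_smul_AJ {ω : ℝ} (hω : 0 < ω) :
    1 - (cdiag m d p J ω)⁻¹ • AJ m d p J ω = 1 - (cdiag m d p J 1)⁻¹ • AJ m d p J 1 := by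
  rw [cdiag_eq_mul p J hω.le, AJ_eq_smul p ω, smul_smul, _root_.mul_inv_rev, mul_assoc,
    inv_mul_cancel₀ hω.ne', mul_one]

end MaxDiagonal

theorem stmt17_general (m d : ℕ) (hd : 1 ≤ d) (p : Fin (m + 1) → ℝ) (hp : ∀ a, 0 < p a)
    (J : Fin d → Fin m) (hJ : Function.Injective J) (ω : ℝ) (hω : 0 < ω) :
    (∀ a, 0 ≤ AJ m d p J ω a a) ∧
    0 < cdiag m d p J ω ∧
    (∀ a b, a ≠ b → AJ m d p J ω a b ≤ 0) ∧
    (∀ a b, 0 ≤ ((1 : Matrix (Fin (m + 1)) (Fin (m + 1)) ℝ) -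
      (cdiag m d p J ω)⁻¹ • AJ m d p J ω) a b) ∧
    ((1 : Matrix (Fin (m + 1)) (Fin (m + 1)) ℝ) -
      (cdiag m d p J ω)⁻¹ • AJ m d p J ω).mulVec (fun _ => (1 : ℝ)) = (fun _ => (1 : ℝ)) ∧
    Matrix.vecMul p ((1 : Matrix (Fin (m + 1)) (Fin (m + 1)) ℝ) -
      (cdiag m d p J ω)⁻¹ • AJ m d p J ω) = p ∧
    (∀ ω' : ℝ, 0 < ω' →
      (1 : Matrix (Fin (m + 1)) (Fin (m + 1)) ℝ) - (cdiag m d p J ω')⁻¹ • AJ m d p J ω' =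
        (1 : Matrix (Fin (m + 1)) (Fin (m + 1)) ℝ) - (cdiag m d p J ω)⁻¹ • AJ m d p J ω) ∧
    (∃ a, ((1 : Matrix (Fin (m + 1)) (Fin (m + 1)) ℝ) -
      (cdiag m d p J ω)⁻¹ • AJ m d p J ω) a a = 0) := by
  have : Nonempty (Fin d) := ⟨⟨0, hd⟩⟩
  have hc : 0 < cdiag m d p J ω :=
    (AJ_last_last_pos hp hJ hω).trans_le (AJ_apply_self_le_cdiag p J ω _)
  obtain ⟨a, ha⟩ := exists_AJ_apply_self_eq_cdiag p J ω
  refine ⟨AJ_apply_self_nonneg hp hJ hω.le, hc, fun a b => AJ_apply_nonpos_of_ne hp hJ hω.le,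
    one_sub_inv_smul_nonneg hc (AJ_apply_self_le_cdiag p J ω)
      (fun a b => AJ_apply_nonpos_of_ne hp hJ hω.le),
    one_sub_smul_mulVec_of_mulVec_eq_zero (AJ_mulVec_one p ω) _,
    vecMul_one_sub_smul_of_vecMul_eq_zero (vecMul_AJ p (hp _).ne' ω) _,
    fun ω' hω' => (one_sub_inv_cdiag_smul_AJ p J hω').trans
      (one_sub_inv_cdiag_smul_AJ p J hω).symm,
    a, one_sub_inv_smul_apply_self_eq_zero ha hc.ne'⟩

/-- for `ω > 0`, `A := A^{(p;ω)}_{(𝒥)}` has nonnegative diagonal entries,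
strictly positive maximal diagonal entry `c`, and nonpositive off-diagonal entries;
consequently the Metropolis matrix `𝓜^{(p)}_{(𝒥)} := I − c⁻¹ A` lies in `⟨p⟩⁺`, does not
depend on `ω`, and has a vanishing diagonal entry (so it lies in `∂⟨p⟩⁺`). -/
theorem stmt17 (m d : ℕ) (hm : 1 ≤ m) (hd : 1 ≤ d) (p : Fin (m + 1) → ℝ)
    (hp : ∀ a, 0 < p a) (hsum : ∑ a, p a = 1)
    (J : Fin d → Fin m) (hJ : Function.Injective J) (ω : ℝ) (hω : 0 < ω) :
    (∀ a, 0 ≤ AJ m d p J ω a a) ∧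
    0 < cdiag m d p J ω ∧
    (∀ a b, a ≠ b → AJ m d p J ω a b ≤ 0) ∧
    (∀ a b, 0 ≤ ((1 : Matrix (Fin (m + 1)) (Fin (m + 1)) ℝ) -
      (cdiag m d p J ω)⁻¹ • AJ m d p J ω) a b) ∧
    ((1 : Matrix (Fin (m + 1)) (Fin (m + 1)) ℝ) -
      (cdiag m d p J ω)⁻¹ • AJ m d p J ω).mulVec (fun _ => (1 : ℝ)) = (fun _ => (1 : ℝ)) ∧
    Matrix.vecMul p ((1 : Matrix (Fin (m + 1)) (Fin (m + 1)) ℝ) -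
      (cdiag m d p J ω)⁻¹ • AJ m d p J ω) = p ∧
    (∀ ω' : ℝ, 0 < ω' →
      (1 : Matrix (Fin (m + 1)) (Fin (m + 1)) ℝ) - (cdiag m d p J ω')⁻¹ • AJ m d p J ω' =
        (1 : Matrix (Fin (m + 1)) (Fin (m + 1)) ℝ) - (cdiag m d p J ω)⁻¹ • AJ m d p J ω) ∧
    (∃ a, ((1 : Matrix (Fin (m + 1)) (Fin (m + 1)) ℝ) -
      (cdiag m d p J ω)⁻¹ • AJ m d p J ω) a a = 0) :=
  stmt17_general m d hd p hp J hJ ω hω
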